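/- Let p be an odd prime and R = ℤ/p²ℤ. Then: (i) V_{p²}(1²1_*) is a single G_{p²}-orbit, namely the orbit of (0,1,0,0); (ii) V_{p²}(1²1_max) is a union of exactly two G_{p²}-orbits, each of cardinality |V_{p²}(1²1_max)|/2; moreover, for any u₁, u₂ ∈ 𝔽_p^× such that u₁/u₂ is not a square in 𝔽_p^×, the elements (0,1,0,pu₁) and (0,1,0,pu₂) represent the two orbits. -/

import Mathlib

/- Common setup: the space of binary cubic forms, the twisted GL₂-action,
the dual action, discriminants, finite Fourier transforms and orbital Gauss sums. -/

noncomputable section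

open scoped BigOperators

namespace OrbitalL

/-- The space of binary cubic forms `x₁u³ + x₂u²v + x₃uv² + x₄v³` over `R`,
identified with coefficient quadruples. -/
abbrev V (R : Type*) := Fin 4 → R

variable {R : Type*} [CommRing R]

/-- Determinant of an element of `GL₂(R)`, as an element of `R`. -/
def detv (g : Matrix.GeneralLinearGroup (Fin 2) R) : R :=
  Matrix.det (g : Matrix (Fin 2) (Fin 2) R)

/-- The twisted action of `GL₂(R)` on binary cubic forms:
`(g·x)(u,v) = (det g)⁻¹ · x(αu + γv, βu + δv)`, in coordinates. -/
def gAct (g : Matrix.GeneralLinearGroup (Fin 2) R) (x : V R) : V R :=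
  let α := (g : Matrix (Fin 2) (Fin 2) R) 0 0
  let β := (g : Matrix (Fin 2) (Fin 2) R) 0 1
  let γ := (g : Matrix (Fin 2) (Fin 2) R) 1 0
  let δ := (g : Matrix (Fin 2) (Fin 2) R) 1 1
  let d : R := ((Matrix.GeneralLinearGroup.det g)⁻¹ : Rˣ)
  ![d * (α ^ 3 * x 0 + α ^ 2 * β * x 1 + α * β ^ 2 * x 2 + β ^ 3 * x 3),
    d * (3 * α ^ 2 * γ * x 0 + (α ^ 2 * δ + 2 * α * β * γ) * x 1
          + (β ^ 2 * γ + 2 * α * β * δ) * x 2 + 3 * β ^ 2 * δ * x 3),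
    d * (3 * α * γ ^ 2 * x 0 + (β * γ ^ 2 + 2 * α * γ * δ) * x 1
          + (α * δ ^ 2 + 2 * β * γ * δ) * x 2 + 3 * β * δ ^ 2 * x 3),
    d * (γ ^ 3 * x 0 + γ ^ 2 * δ * x 1 + γ * δ ^ 2 * x 2 + δ ^ 3 * x 3)]

/-- The left action of `GL₂(R)` on the dual space `V*`, determined by
`[x, g∗y] = [(det g)·g⁻¹·x, y]`, in coordinates. -/
def dAct (g : Matrix.GeneralLinearGroup (Fin 2) R) (y : V R) : V R :=
  let α := (g : Matrix (Fin 2) (Fin 2) R) 0 0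
  let β := (g : Matrix (Fin 2) (Fin 2) R) 0 1
  let γ := (g : Matrix (Fin 2) (Fin 2) R) 1 0
  let δ := (g : Matrix (Fin 2) (Fin 2) R) 1 1
  let d : R := ((Matrix.GeneralLinearGroup.det g)⁻¹ : Rˣ)
  ![d * (δ ^ 3 * y 0 - 3 * γ * δ ^ 2 * y 1 + 3 * γ ^ 2 * δ * y 2 - γ ^ 3 * y 3),
    d * (-(β * δ ^ 2) * y 0 + (α * δ ^ 2 + 2 * β * γ * δ) * y 1
          - (β * γ ^ 2 + 2 * α * γ * δ) * y 2 + α * γ ^ 2 * y 3),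
    d * (β ^ 2 * δ * y 0 - (β ^ 2 * γ + 2 * α * β * δ) * y 1
          + (α ^ 2 * δ + 2 * α * β * γ) * y 2 - α ^ 2 * γ * y 3),
    d * (-(β ^ 3) * y 0 + 3 * α * β ^ 2 * y 1 - 3 * α ^ 2 * β * y 2 + α ^ 3 * y 3)]

/-- The canonical pairing `[x,y] = x₁y₁ + x₂y₂ + x₃y₃ + x₄y₄` between `V` and `V*`. -/
def pairV (x y : V R) : R := x 0 * y 0 + x 1 * y 1 + x 2 * y 2 + x 3 * y 3

/-- The discriminant of a binary cubic form. -/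
def P (x : V R) : R :=
  (x 1) ^ 2 * (x 2) ^ 2 + 18 * x 0 * x 1 * x 2 * x 3 - 4 * x 0 * (x 2) ^ 3
    - 4 * (x 1) ^ 3 * x 3 - 27 * (x 0) ^ 2 * (x 3) ^ 2

/-- The discriminant on the dual space. -/
def Pstar (y : V R) : R :=
  3 * (y 1) ^ 2 * (y 2) ^ 2 + 6 * y 0 * y 1 * y 2 * y 3 - 4 * y 0 * (y 2) ^ 3
    - 4 * (y 1) ^ 3 * y 3 - (y 0) ^ 2 * (y 3) ^ 2

instance (N : ℕ) [NeZero N] : Fintype (Matrix.GeneralLinearGroup (Fin 2) (ZMod N)) :=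
  inferInstanceAs (Fintype (Matrix (Fin 2) (Fin 2) (ZMod N))ˣ)

/-- The additive character `r ↦ exp(2πi·r/N)` of `ℤ/Nℤ`. -/
def eN (N : ℕ) (r : ZMod N) : ℂ :=
  Complex.exp (2 * Real.pi * Complex.I * (r.val : ℂ) / (N : ℂ))

/-- The orbital Gauss sum `W_N(χ,a,b) = Σ_{g ∈ GL₂(ℤ/Nℤ)} χ(det g)·⟨g·a, b⟩_N`. -/
def W (N : ℕ) [NeZero N] (χ : DirichletCharacter ℂ N) (a b : V (ZMod N)) : ℂ :=
  ∑ g : Matrix.GeneralLinearGroup (Fin 2) (ZMod N),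
    χ (detv g) * eN N (pairV (gAct g a) b)

/-- The finite Fourier transform `f̂(b) = N⁻⁴ Σ_a f(a)·⟨a,b⟩_N`. -/
def fhat (N : ℕ) [NeZero N] (f : V (ZMod N) → ℂ) (b : V (ZMod N)) : ℂ :=
  ((N : ℂ) ^ 4)⁻¹ * ∑ a : V (ZMod N), f a * eN N (pairV a b)

/-- Componentwise reduction `V(ℤ/Nℤ) → V(ℤ/Mℤ)` for `M ∣ N`. -/
def Vred {N M : ℕ} (h : M ∣ N) (x : V (ZMod N)) : V (ZMod M) :=
  fun i => ZMod.castHom h (ZMod M) (x i)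

/- Factorization-type predicates for binary cubic forms over a field. -/

/-- The product of the linear form `l₁u + l₂v` with the quadratic form
`q₁u² + q₂uv + q₃v²`, as a binary cubic form. -/
def linMul (l : R × R) (q : Fin 3 → R) : V R :=
  ![l.1 * q 0, l.1 * q 1 + l.2 * q 0, l.1 * q 2 + l.2 * q 1, l.2 * q 2]

/-- The product of two linear forms, as a binary quadratic form. -/
def lin2Mul (l m : R × R) : Fin 3 → R :=
  ![l.1 * m.1, l.1 * m.2 + l.2 * m.1, l.2 * m.2]

/-- The product of three linear forms, as a binary cubic form. -/
def lin3Mul (l m n : R × R) : V R :=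
  ![l.1 * m.1 * n.1,
    l.1 * m.1 * n.2 + l.1 * m.2 * n.1 + l.2 * m.1 * n.1,
    l.1 * m.2 * n.2 + l.2 * m.1 * n.2 + l.2 * m.2 * n.1,
    l.2 * m.2 * n.2]

/-- Two linear forms are proportional if one is a nonzero scalar multiple of the other. -/
def Proportional (l m : R × R) : Prop := ∃ t : R, t ≠ 0 ∧ m = (t * l.1, t * l.2)

/-- A binary quadratic form is irreducible if it is nonzero and is not a product
of two linear forms. -/
def IrredQuad (q : Fin 3 → R) : Prop := q ≠ 0 ∧ ¬∃ l m : R × R, q = lin2Mul l m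

/-- Type (3): no linear factor (in particular nonzero). -/
def IsType3 (a : V R) : Prop := ¬∃ (l : R × R) (q : Fin 3 → R), l ≠ 0 ∧ a = linMul l q

/-- Type (21): a linear form times an irreducible quadratic form. -/
def IsType21 (a : V R) : Prop :=
  ∃ (l : R × R) (q : Fin 3 → R), l ≠ 0 ∧ IrredQuad q ∧ a = linMul l q

/-- Type (111): a product of three pairwise non-proportional linear forms. -/
def IsType111 (a : V R) : Prop :=
  ∃ l m n : R × R, l ≠ 0 ∧ m ≠ 0 ∧ n ≠ 0 ∧ ¬Proportional l m ∧ ¬Proportional l n ∧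
    ¬Proportional m n ∧ a = lin3Mul l m n

/-- Type (1²1): `l²·m` with `l`, `m` non-proportional linear forms. -/
def IsType121 (a : V R) : Prop :=
  ∃ l m : R × R, l ≠ 0 ∧ m ≠ 0 ∧ ¬Proportional l m ∧ a = lin3Mul l l m

/-- Type (1³): a nonzero scalar times the cube of a linear form. -/
def IsType13 (a : V R) : Prop :=
  ∃ (c : R) (l : R × R), c ≠ 0 ∧ l ≠ 0 ∧ a = c • lin3Mul l l l

/- The strata of `V(ℤ/p²ℤ)`. -/

theorem p_dvd_p_sq (p : ℕ) : p ∣ p ^ 2 := dvd_pow_self p (by norm_num)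

/-- Reduction `V(ℤ/p²ℤ) → V(ℤ/pℤ)`. -/
def Vredp (p : ℕ) (x : V (ZMod (p ^ 2))) : V (ZMod p) := Vred (p_dvd_p_sq p) x

/-- `x ∈ pR` for `R = ℤ/p²ℤ`. -/
def InPR (p : ℕ) (x : ZMod (p ^ 2)) : Prop := ∃ y : ZMod (p ^ 2), x = (p : ZMod (p ^ 2)) * y

/-- `x ∈ pR^× = pR ∖ {0}` for `R = ℤ/p²ℤ`. -/
def InPRx (p : ℕ) (x : ZMod (p ^ 2)) : Prop := InPR p x ∧ x ≠ 0

def D121max (p : ℕ) : Set (V (ZMod (p ^ 2))) :=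
  {a | a 0 = 0 ∧ IsUnit (a 1) ∧ InPR p (a 2) ∧ InPRx p (a 3)}

def D121s (p : ℕ) : Set (V (ZMod (p ^ 2))) :=
  {a | a 0 = 0 ∧ IsUnit (a 1) ∧ InPR p (a 2) ∧ a 3 = 0}

def D13max (p : ℕ) : Set (V (ZMod (p ^ 2))) :=
  {a | IsUnit (a 0) ∧ InPR p (a 1) ∧ InPR p (a 2) ∧ InPRx p (a 3)}

def D13s (p : ℕ) : Set (V (ZMod (p ^ 2))) :=
  {a | IsUnit (a 0) ∧ InPR p (a 1) ∧ InPRx p (a 2) ∧ a 3 = 0}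

def D13ss (p : ℕ) : Set (V (ZMod (p ^ 2))) :=
  {a | IsUnit (a 0) ∧ InPR p (a 1) ∧ a 2 = 0 ∧ a 3 = 0}

/-- The `GL₂`-orbit of a subset of `V R`. -/
def GOrbit (S : Set (V R)) : Set (V R) :=
  {x | ∃ (g : Matrix.GeneralLinearGroup (Fin 2) R) (a : V R), a ∈ S ∧ x = gAct g a}

/-- The `GL₂`-orbit of a single element. -/
def orbitOf (a : V R) : Set (V R) :=
  {x | ∃ g : Matrix.GeneralLinearGroup (Fin 2) R, x = gAct g a}

def V121max (p : ℕ) : Set (V (ZMod (p ^ 2))) := GOrbit (D121max p)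
def V121s (p : ℕ) : Set (V (ZMod (p ^ 2))) := GOrbit (D121s p)
def V13max (p : ℕ) : Set (V (ZMod (p ^ 2))) := GOrbit (D13max p)
def V13s (p : ℕ) : Set (V (ZMod (p ^ 2))) := GOrbit (D13s p)
def V13ss (p : ℕ) : Set (V (ZMod (p ^ 2))) := GOrbit (D13ss p)

/-- The set of forms mod `p²` detecting nonmaximal cubic rings at `p`. -/
def Vnm (p : ℕ) : Set (V (ZMod (p ^ 2))) :=
  {x | ∃ y : V (ZMod (p ^ 2)), x = (p : ZMod (p ^ 2)) • y} ∪ V13ss p ∪ V13s p ∪ V121s p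

/-- The set of forms mod `p²` detecting nonmaximal-or-totally-ramified cubic rings at `p`. -/
def Vnm' (p : ℕ) : Set (V (ZMod (p ^ 2))) := Vnm p ∪ V13max p

/-- The alternating pairing on `V(ℤ/p²ℤ)` induced by identifying `V*` with `V` via `ι`:
`[x,y] = x₄y₁ − (1/3)x₃y₂ + (1/3)x₂y₃ − x₁y₄`. -/
def pairAlt (p : ℕ) (x y : V (ZMod (p ^ 2))) : ZMod (p ^ 2) :=
  x 3 * y 0 - (3 : ZMod (p ^ 2))⁻¹ * (x 2 * y 1) + (3 : ZMod (p ^ 2))⁻¹ * (x 1 * y 2)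
    - x 0 * y 3

/-- The finite Fourier transform on `V(ℤ/p²ℤ)` under the identification of `V*` with `V`. -/
def fhatAlt (p : ℕ) [NeZero p] (f : V (ZMod (p ^ 2)) → ℂ) (b : V (ZMod (p ^ 2))) : ℂ :=
  (((p : ℂ) ^ 2) ^ 4)⁻¹ * ∑ a : V (ZMod (p ^ 2)), f a * eN (p ^ 2) (pairAlt p a b)

/-- The orbital Gauss sum with trivial character on `V(ℤ/p²ℤ)`, under the
identification of `V*` with `V`. -/
def Walt (p : ℕ) [NeZero p] (a b : V (ZMod (p ^ 2))) : ℂ :=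
  ∑ g : Matrix.GeneralLinearGroup (Fin 2) (ZMod (p ^ 2)), eN (p ^ 2) (pairAlt p (gAct g a) b)



/- ===== Auxiliary lemmas ===== -/

section Aux

set_option linter.unusedSectionVars false

variable {R : Type*} [CommRing R]

lemma v4_0 (a b c d : R) : (![a,b,c,d] : V R) 0 = a := rfl
lemma v4_1 (a b c d : R) : (![a,b,c,d] : V R) 1 = b := rfl
lemma v4_2 (a b c d : R) : (![a,b,c,d] : V R) 2 = c := rfl
lemma v4_3 (a b c d : R) : (![a,b,c,d] : V R) 3 = d := rfl

lemma m2_00 (a b c d : R) : (![![a,b],![c,d]] : Matrix (Fin 2) (Fin 2) R) 0 0 = a := rfl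
lemma m2_01 (a b c d : R) : (![![a,b],![c,d]] : Matrix (Fin 2) (Fin 2) R) 0 1 = b := rfl
lemma m2_10 (a b c d : R) : (![![a,b],![c,d]] : Matrix (Fin 2) (Fin 2) R) 1 0 = c := rfl
lemma m2_11 (a b c d : R) : (![![a,b],![c,d]] : Matrix (Fin 2) (Fin 2) R) 1 1 = d := rfl

lemma funext4 {f g : V R} (h0 : f 0 = g 0) (h1 : f 1 = g 1) (h2 : f 2 = g 2)
    (h3 : f 3 = g 3) : f = g := by
  funext i
  fin_cases i
  · exact h0
  · exact h1
  · exact h2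
  · exact h3

lemma gAct_apply0 (g : Matrix.GeneralLinearGroup (Fin 2) R) (x : V R) :
    gAct g x 0 = (((Matrix.GeneralLinearGroup.det g)⁻¹ : Rˣ) : R) *
      ((g : Matrix (Fin 2) (Fin 2) R) 0 0 ^ 3 * x 0
        + (g : Matrix (Fin 2) (Fin 2) R) 0 0 ^ 2 * (g : Matrix (Fin 2) (Fin 2) R) 0 1 * x 1
        + (g : Matrix (Fin 2) (Fin 2) R) 0 0 * (g : Matrix (Fin 2) (Fin 2) R) 0 1 ^ 2 * x 2
        + (g : Matrix (Fin 2) (Fin 2) R) 0 1 ^ 3 * x 3) := rfl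

lemma gAct_apply1 (g : Matrix.GeneralLinearGroup (Fin 2) R) (x : V R) :
    gAct g x 1 = (((Matrix.GeneralLinearGroup.det g)⁻¹ : Rˣ) : R) *
      (3 * (g : Matrix (Fin 2) (Fin 2) R) 0 0 ^ 2 * (g : Matrix (Fin 2) (Fin 2) R) 1 0 * x 0
        + ((g : Matrix (Fin 2) (Fin 2) R) 0 0 ^ 2 * (g : Matrix (Fin 2) (Fin 2) R) 1 1
            + 2 * (g : Matrix (Fin 2) (Fin 2) R) 0 0 * (g : Matrix (Fin 2) (Fin 2) R) 0 1
              * (g : Matrix (Fin 2) (Fin 2) R) 1 0) * x 1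
        + ((g : Matrix (Fin 2) (Fin 2) R) 0 1 ^ 2 * (g : Matrix (Fin 2) (Fin 2) R) 1 0
            + 2 * (g : Matrix (Fin 2) (Fin 2) R) 0 0 * (g : Matrix (Fin 2) (Fin 2) R) 0 1
              * (g : Matrix (Fin 2) (Fin 2) R) 1 1) * x 2
        + 3 * (g : Matrix (Fin 2) (Fin 2) R) 0 1 ^ 2 * (g : Matrix (Fin 2) (Fin 2) R) 1 1 * x 3) := rfl

lemma gAct_apply2 (g : Matrix.GeneralLinearGroup (Fin 2) R) (x : V R) :
    gAct g x 2 = (((Matrix.GeneralLinearGroup.det g)⁻¹ : Rˣ) : R) *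
      (3 * (g : Matrix (Fin 2) (Fin 2) R) 0 0 * (g : Matrix (Fin 2) (Fin 2) R) 1 0 ^ 2 * x 0
        + ((g : Matrix (Fin 2) (Fin 2) R) 0 1 * (g : Matrix (Fin 2) (Fin 2) R) 1 0 ^ 2
            + 2 * (g : Matrix (Fin 2) (Fin 2) R) 0 0 * (g : Matrix (Fin 2) (Fin 2) R) 1 0
              * (g : Matrix (Fin 2) (Fin 2) R) 1 1) * x 1
        + ((g : Matrix (Fin 2) (Fin 2) R) 0 0 * (g : Matrix (Fin 2) (Fin 2) R) 1 1 ^ 2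
            + 2 * (g : Matrix (Fin 2) (Fin 2) R) 0 1 * (g : Matrix (Fin 2) (Fin 2) R) 1 0
              * (g : Matrix (Fin 2) (Fin 2) R) 1 1) * x 2
        + 3 * (g : Matrix (Fin 2) (Fin 2) R) 0 1 * (g : Matrix (Fin 2) (Fin 2) R) 1 1 ^ 2 * x 3) := rfl

lemma gAct_apply3 (g : Matrix.GeneralLinearGroup (Fin 2) R) (x : V R) :
    gAct g x 3 = (((Matrix.GeneralLinearGroup.det g)⁻¹ : Rˣ) : R) *
      ((g : Matrix (Fin 2) (Fin 2) R) 1 0 ^ 3 * x 0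
        + (g : Matrix (Fin 2) (Fin 2) R) 1 0 ^ 2 * (g : Matrix (Fin 2) (Fin 2) R) 1 1 * x 1
        + (g : Matrix (Fin 2) (Fin 2) R) 1 0 * (g : Matrix (Fin 2) (Fin 2) R) 1 1 ^ 2 * x 2
        + (g : Matrix (Fin 2) (Fin 2) R) 1 1 ^ 3 * x 3) := rfl

lemma gAct_one' (x : V R) : gAct 1 x = x := by
  funext i
  fin_cases i <;> simp [gAct, Matrix.GeneralLinearGroup.det]

set_option maxHeartbeats 2000000 in
lemma gAct_mul (g h : Matrix.GeneralLinearGroup (Fin 2) R) (x : V R) :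
    gAct (g * h) x = gAct g (gAct h x) := by
  have hd : ((Matrix.GeneralLinearGroup.det (g * h))⁻¹ : Rˣ).val
      = ((Matrix.GeneralLinearGroup.det g)⁻¹ : Rˣ).val
        * ((Matrix.GeneralLinearGroup.det h)⁻¹ : Rˣ).val := by
    rw [map_mul, mul_inv, Units.val_mul]
  have hent : ∀ i j, ((g * h : Matrix.GeneralLinearGroup (Fin 2) R) : Matrix (Fin 2) (Fin 2) R) i j
      = (g : Matrix (Fin 2) (Fin 2) R) i 0 * (h : Matrix (Fin 2) (Fin 2) R) 0 j
        + (g : Matrix (Fin 2) (Fin 2) R) i 1 * (h : Matrix (Fin 2) (Fin 2) R) 1 j := by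
    intro i j
    show ((g : Matrix (Fin 2) (Fin 2) R) * (h : Matrix (Fin 2) (Fin 2) R)) i j = _
    rw [Matrix.mul_apply, Fin.sum_univ_two]
  apply funext4 <;>
  · simp only [gAct, v4_0, v4_1, v4_2, v4_3, hd, hent]
    ring

lemma gAct_cancel {g : Matrix.GeneralLinearGroup (Fin 2) R} {x y : V R}
    (h : gAct g x = y) : x = gAct g⁻¹ y := by
  rw [← h, ← gAct_mul, inv_mul_cancel, gAct_one']

lemma dcancel {d Δ X Y : R} (hd : d * Δ = 1) (h : d * X = Y) : X = Δ * Y := by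
  calc X = (d * Δ) * X := by rw [hd, one_mul]
  _ = Δ * (d * X) := by ring
  _ = Δ * Y := by rw [h]

lemma dcancel' {d Δ X Y : R} (hd : d * Δ = 1) (h : X = Δ * Y) : d * X = Y := by
  rw [h]
  calc d * (Δ * Y) = (d * Δ) * Y := by ring
  _ = Y := by rw [hd, one_mul]

end Aux

section ZModAux

variable (p : ℕ) [Fact p.Prime]

lemma neZeroP2 : NeZero (p ^ 2) := ⟨pow_ne_zero 2 (Nat.Prime.ne_zero Fact.out)⟩

attribute [local instance] neZeroP2

/-- Reduction map. -/
def phi : ZMod (p ^ 2) →+* ZMod p := ZMod.castHom (p_dvd_p_sq p) (ZMod p)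

variable {p}

lemma phi_eq (z : ZMod (p ^ 2)) : phi p z = ((z.val : ℕ) : ZMod p) := by
  rw [phi, ZMod.castHom_apply, ← ZMod.natCast_val]

lemma phi_zero_iff (z : ZMod (p ^ 2)) : phi p z = 0 ↔ p ∣ z.val := by
  rw [phi_eq, ZMod.natCast_eq_zero_iff]

lemma pmul_eq_zero_iff (z : ZMod (p ^ 2)) :
    (p : ZMod (p ^ 2)) * z = 0 ↔ phi p z = 0 := by
  rw [phi_zero_iff]
  conv_lhs => rw [← ZMod.natCast_zmod_val z, ← Nat.cast_mul, ZMod.natCast_eq_zero_iff]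
  have hp : 0 < p := Nat.pos_of_ne_zero (Nat.Prime.ne_zero (Fact.out : p.Prime))
  have key : ∀ v : ℕ, (p ^ 2 ∣ p * v ↔ p ∣ v) := by
    intro v; rw [pow_two]; exact Nat.mul_dvd_mul_iff_left hp
  exact key z.val

lemma pmul_eq_iff (x y : ZMod (p ^ 2)) :
    (p : ZMod (p ^ 2)) * x = (p : ZMod (p ^ 2)) * y ↔ phi p x = phi p y := by
  rw [← sub_eq_zero, ← mul_sub, pmul_eq_zero_iff, map_sub, sub_eq_zero]

lemma isUnit_iff_phi (x : ZMod (p ^ 2)) : IsUnit x ↔ phi p x ≠ 0 := by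
  have hiff : IsUnit x ↔ ¬ p ∣ x.val := by
    conv_lhs => rw [← ZMod.natCast_zmod_val x]
    rw [ZMod.isUnit_iff_coprime]
    constructor
    · intro h hdvd
      have h2 : p ∣ p ^ 2 := p_dvd_p_sq p
      have := Nat.eq_one_of_dvd_coprimes h hdvd h2
      exact Nat.Prime.ne_one (Fact.out : p.Prime) this
    · intro h
      have hcp : Nat.Coprime (x.val) p :=
        (Nat.coprime_comm.mp ((Nat.Prime.coprime_iff_not_dvd (Fact.out : p.Prime)).mpr h))
      exact Nat.Coprime.pow_right 2 hcp
  rw [hiff, Ne, phi_zero_iff]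

lemma inpr_iff (x : ZMod (p ^ 2)) : InPR p x ↔ phi p x = 0 := by
  constructor
  · rintro ⟨y, rfl⟩
    rw [map_mul]
    have : phi p ((p : ZMod (p ^ 2))) = 0 := by
      rw [map_natCast, ZMod.natCast_self]
    rw [this, zero_mul]
  · intro h
    obtain ⟨k, hk⟩ := (phi_zero_iff x).mp h
    refine ⟨(k : ZMod (p ^ 2)), ?_⟩
    rw [← Nat.cast_mul, ← hk, ZMod.natCast_zmod_val]

lemma phi_p : phi p ((p : ZMod (p ^ 2))) = 0 := by
  rw [map_natCast, ZMod.natCast_self]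

lemma mul_eq_zero_phi {x y : ZMod (p ^ 2)} (hx : phi p x = 0) (hy : phi p y = 0) :
    x * y = 0 := by
  obtain ⟨a, rfl⟩ := (inpr_iff x).mpr hx
  obtain ⟨b, rfl⟩ := (inpr_iff y).mpr hy
  have hpp : (p : ZMod (p ^ 2)) * (p : ZMod (p ^ 2)) = 0 := by
    rw [← Nat.cast_mul, ← pow_two, ZMod.natCast_self]
  calc (p : ZMod (p ^ 2)) * a * ((p : ZMod (p ^ 2)) * b)
      = ((p : ZMod (p ^ 2)) * (p : ZMod (p ^ 2))) * (a * b) := by ring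
  _ = 0 := by rw [hpp, zero_mul]

lemma phi_lift (t : ZMod p) : phi p ((t.val : ZMod (p ^ 2))) = t := by
  have h1 : t.val < p ^ 2 := lt_of_lt_of_le (ZMod.val_lt t)
    (Nat.le_self_pow (by norm_num) p)
  rw [phi_eq, ZMod.val_cast_of_lt h1, ZMod.natCast_zmod_val]

lemma two_unit (hp : p ≠ 2) : IsUnit (2 : ZMod (p ^ 2)) := by
  rw [show (2 : ZMod (p ^ 2)) = ((2 : ℕ) : ZMod (p ^ 2)) by norm_num, isUnit_iff_phi,
    map_natCast, Ne, ZMod.natCast_eq_zero_iff]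
  intro hdvd
  exact hp ((Nat.prime_dvd_prime_iff_eq (Fact.out : p.Prime) Nat.prime_two).mp hdvd)

/-- Our standard representative. -/
def rep (p : ℕ) (u : ZMod p) : V (ZMod (p ^ 2)) :=
  ![0, 1, 0, (p : ZMod (p ^ 2)) * ((u.val : ZMod (p ^ 2)))]

lemma phi_rep3 (u : ZMod p) : phi p (rep p u 3) = 0 := by
  rw [rep, v4_3, map_mul, phi_p, zero_mul]

lemma rep_mem_D121max {u : ZMod p} (hu : u ≠ 0) : rep p u ∈ D121max p := by
  refine ⟨rfl, isUnit_one, ⟨0, by rw [mul_zero]; rfl⟩, ⟨⟨(u.val : ZMod (p ^ 2)), rfl⟩, ?_⟩⟩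
  show (p : ZMod (p ^ 2)) * ((u.val : ZMod (p ^ 2))) ≠ 0
  rw [Ne, pmul_eq_zero_iff, phi_lift]
  exact hu

end ZModAux

section Key

variable {p : ℕ} [Fact p.Prime]

set_option maxHeartbeats 1000000 in
lemma key (hp : p ≠ 2) (u₁ u₂ : ZMod p) (hu₂ : u₂ ≠ 0)
    (g : Matrix.GeneralLinearGroup (Fin 2) (ZMod (p ^ 2)))
    (h : gAct g (rep p u₂) = rep p u₁) :
    (g : Matrix (Fin 2) (Fin 2) (ZMod (p ^ 2))) 0 1 = 0 ∧
    (g : Matrix (Fin 2) (Fin 2) (ZMod (p ^ 2))) 1 0 = 0 ∧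
    (g : Matrix (Fin 2) (Fin 2) (ZMod (p ^ 2))) 0 0 = 1 ∧
    ((g : Matrix (Fin 2) (Fin 2) (ZMod (p ^ 2))) 1 1) ^ 2
        * ((p : ZMod (p ^ 2)) * ((u₂.val : ZMod (p ^ 2))))
      = (p : ZMod (p ^ 2)) * ((u₁.val : ZMod (p ^ 2))) := by
  set A := (g : Matrix (Fin 2) (Fin 2) (ZMod (p ^ 2))) with hA
  set α := A 0 0 with hαd
  set β := A 0 1 with hβd
  set γ := A 1 0 with hγd
  set δ := A 1 1 with hδd
  set d := (((Matrix.GeneralLinearGroup.det g)⁻¹ : (ZMod (p ^ 2))ˣ) : ZMod (p ^ 2)) with hdd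
  set P₂ := (p : ZMod (p ^ 2)) * ((u₂.val : ZMod (p ^ 2))) with hP₂d
  set P₁ := (p : ZMod (p ^ 2)) * ((u₁.val : ZMod (p ^ 2))) with hP₁d
  have hdet : d * (α * δ - β * γ) = 1 := by
    have h0 : d * A.det = 1 := Units.inv_mul _
    rwa [Matrix.det_fin_two] at h0
  have hdetu : IsUnit (α * δ - β * γ) := by
    have h0 : IsUnit A.det := ⟨Matrix.GeneralLinearGroup.det g, rfl⟩
    rwa [Matrix.det_fin_two] at h0
  have e0 : d * (α ^ 3 * 0 + α ^ 2 * β * 1 + α * β ^ 2 * 0 + β ^ 3 * P₂) = 0 := congrFun h 0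
  have e1 : d * (3 * α ^ 2 * γ * 0 + (α ^ 2 * δ + 2 * α * β * γ) * 1
      + (β ^ 2 * γ + 2 * α * β * δ) * 0 + 3 * β ^ 2 * δ * P₂) = 1 := congrFun h 1
  have e2 : d * (3 * α * γ ^ 2 * 0 + (β * γ ^ 2 + 2 * α * γ * δ) * 1
      + (α * δ ^ 2 + 2 * β * γ * δ) * 0 + 3 * β * δ ^ 2 * P₂) = 0 := congrFun h 2
  have e3 : d * (γ ^ 3 * 0 + γ ^ 2 * δ * 1 + γ * δ ^ 2 * 0 + δ ^ 3 * P₂) = P₁ := congrFun h 3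
  have E0 := dcancel hdet e0
  have E1 := dcancel hdet e1
  have E2 := dcancel hdet e2
  have E3 := dcancel hdet e3
  clear e0 e1 e2 e3 hdet
  -- reductions mod p
  have hfP₂ : phi p P₂ = 0 := by rw [hP₂d, map_mul, phi_p, zero_mul]
  have hfP₁ : phi p P₁ = 0 := by rw [hP₁d, map_mul, phi_p, zero_mul]
  set a := phi p α with had
  set b := phi p β with hbd
  set c := phi p γ with hcd
  set e := phi p δ with hed
  have hΔ : a * e - b * c ≠ 0 := by
    have h0 := hdetu.map (phi p)
    rw [map_sub, map_mul, map_mul] at h0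
    exact h0.ne_zero
  have F0 := congrArg (phi p) E0
  have F1 := congrArg (phi p) E1
  have F2 := congrArg (phi p) E2
  have F3 := congrArg (phi p) E3
  simp only [map_add, map_mul, map_sub, map_pow, map_zero, map_one, map_ofNat,
    hfP₂, hfP₁] at F0 F1 F2 F3
  have ha : a ≠ 0 := by
    intro h0
    apply hΔ
    linear_combination (a * e + 2 * b * c) * h0 - F1
  have hb : b = 0 := by
    have h2 : a ^ 2 * b = 0 := by linear_combination F0
    rcases mul_eq_zero.mp h2 with h3 | h3
    · exact absurd ((pow_eq_zero_iff two_ne_zero).mp h3) ha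
    · exact h3
  have he : e ≠ 0 := by
    intro h0
    apply hΔ
    linear_combination a * h0 - c * hb
  have hc : c = 0 := by
    have h2 : c ^ 2 * e = 0 := by linear_combination F3
    rcases mul_eq_zero.mp h2 with h3 | h3
    · exact (pow_eq_zero_iff (two_ne_zero)).mp h3
    · exact absurd h3 he
  clear F0 F1 F2 F3
  -- back in ZMod (p^2)
  have hβP₂ : β * P₂ = 0 := mul_eq_zero_phi hb hfP₂
  have hαu : IsUnit α := (isUnit_iff_phi α).mpr ha
  have hδu : IsUnit δ := (isUnit_iff_phi δ).mpr he
  have h2u : IsUnit (2 : ZMod (p ^ 2)) := two_unit hp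
  have hβ0 : β = 0 := by
    have h2 : α ^ 2 * β = 0 := by linear_combination E0 - β ^ 2 * hβP₂
    exact ((hαu.pow 2).mul_right_eq_zero).mp h2
  rw [hβ0] at E1 E2
  have hγ0 : γ = 0 := by
    have h2 : (2 * α * δ) * γ = 0 := by linear_combination E2
    exact (((h2u.mul hαu).mul hδu).mul_right_eq_zero).mp h2
  rw [hγ0] at E1 E3
  have hα1 : α = 1 := by
    have h2 : (α * δ) * (α - 1) = 0 := by linear_combination E1
    have h3 : α - 1 = 0 := ((hαu.mul hδu).mul_right_eq_zero).mp h2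
    linear_combination h3
  rw [hα1, hβ0] at E3
  have hfin : δ ^ 2 * P₂ = P₁ := by
    have h2 : δ * (δ ^ 2 * P₂ - P₁) = 0 := by linear_combination E3
    have h3 := (hδu.mul_right_eq_zero).mp h2
    linear_combination h3
  exact ⟨hβ0, hγ0, hα1, hfin⟩

end Key

section Reach

variable {p : ℕ} [Fact p.Prime]

lemma key_sq (hp : p ≠ 2) (u₁ u₂ : ZMod p) (hu₂ : u₂ ≠ 0)
    (g : Matrix.GeneralLinearGroup (Fin 2) (ZMod (p ^ 2)))
    (h : gAct g (rep p u₂) = rep p u₁) :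
    ∃ t : ZMod p, t ≠ 0 ∧ u₁ = t ^ 2 * u₂ := by
  obtain ⟨hβ, hγ, hα, hδ2⟩ := key hp u₁ u₂ hu₂ g h
  set δ := (g : Matrix (Fin 2) (Fin 2) (ZMod (p ^ 2))) 1 1 with hδd
  have hδu : IsUnit δ := by
    have h0 : IsUnit (Matrix.det (g : Matrix (Fin 2) (Fin 2) (ZMod (p ^ 2)))) :=
      ⟨Matrix.GeneralLinearGroup.det g, rfl⟩
    rw [Matrix.det_fin_two, hα, hβ, hγ] at h0
    simpa using h0
  have he : phi p δ ≠ 0 := (isUnit_iff_phi δ).mp hδu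
  have h2 : phi p (δ ^ 2 * ((u₂.val : ZMod (p ^ 2)))) = phi p ((u₁.val : ZMod (p ^ 2))) := by
    apply (pmul_eq_iff _ _).mp
    calc (p : ZMod (p ^ 2)) * (δ ^ 2 * ((u₂.val : ZMod (p ^ 2))))
        = δ ^ 2 * ((p : ZMod (p ^ 2)) * ((u₂.val : ZMod (p ^ 2)))) := by ring
    _ = (p : ZMod (p ^ 2)) * ((u₁.val : ZMod (p ^ 2))) := hδ2
  rw [map_mul, map_pow, phi_lift, phi_lift] at h2
  exact ⟨phi p δ, he, h2.symm⟩

lemma transfer (hp : p ≠ 2) {u : ZMod p} (hu : u ≠ 0) (w : ZMod p)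
    (g : Matrix.GeneralLinearGroup (Fin 2) (ZMod (p ^ 2)))
    (h : gAct g (rep p u) = rep p u) : gAct g (rep p w) = rep p w := by
  obtain ⟨hβ, hγ, hα, hδ2⟩ := key hp u u hu g h
  have he2 : phi p ((g : Matrix (Fin 2) (Fin 2) (ZMod (p ^ 2))) 1 1) ^ 2 * u = u := by
    have h2 : phi p ((g : Matrix (Fin 2) (Fin 2) (ZMod (p ^ 2))) 1 1 ^ 2
        * ((u.val : ZMod (p ^ 2)))) = phi p ((u.val : ZMod (p ^ 2))) := by
      apply (pmul_eq_iff _ _).mp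
      calc (p : ZMod (p ^ 2)) * ((g : Matrix (Fin 2) (Fin 2) (ZMod (p ^ 2))) 1 1 ^ 2
            * ((u.val : ZMod (p ^ 2))))
          = (g : Matrix (Fin 2) (Fin 2) (ZMod (p ^ 2))) 1 1 ^ 2
            * ((p : ZMod (p ^ 2)) * ((u.val : ZMod (p ^ 2)))) := by ring
      _ = (p : ZMod (p ^ 2)) * ((u.val : ZMod (p ^ 2))) := hδ2
    rwa [map_mul, map_pow, phi_lift] at h2
  have he1 : phi p ((g : Matrix (Fin 2) (Fin 2) (ZMod (p ^ 2))) 1 1) ^ 2 = 1 :=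
    mul_right_cancel₀ hu (he2.trans (one_mul u).symm)
  have hw : (g : Matrix (Fin 2) (Fin 2) (ZMod (p ^ 2))) 1 1 ^ 2
      * ((p : ZMod (p ^ 2)) * ((w.val : ZMod (p ^ 2))))
      = (p : ZMod (p ^ 2)) * ((w.val : ZMod (p ^ 2))) := by
    calc (g : Matrix (Fin 2) (Fin 2) (ZMod (p ^ 2))) 1 1 ^ 2
          * ((p : ZMod (p ^ 2)) * ((w.val : ZMod (p ^ 2))))
        = (p : ZMod (p ^ 2)) * ((g : Matrix (Fin 2) (Fin 2) (ZMod (p ^ 2))) 1 1 ^ 2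
            * ((w.val : ZMod (p ^ 2)))) := by ring
    _ = (p : ZMod (p ^ 2)) * ((w.val : ZMod (p ^ 2))) := by
      apply (pmul_eq_iff _ _).mpr
      rw [map_mul, map_pow, phi_lift, he1, one_mul]
  have hdet : (((Matrix.GeneralLinearGroup.det g)⁻¹ : (ZMod (p ^ 2))ˣ) : ZMod (p ^ 2))
      * ((g : Matrix (Fin 2) (Fin 2) (ZMod (p ^ 2))) 0 0
          * (g : Matrix (Fin 2) (Fin 2) (ZMod (p ^ 2))) 1 1
        - (g : Matrix (Fin 2) (Fin 2) (ZMod (p ^ 2))) 0 1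
          * (g : Matrix (Fin 2) (Fin 2) (ZMod (p ^ 2))) 1 0) = 1 := by
    have h0 : (((Matrix.GeneralLinearGroup.det g)⁻¹ : (ZMod (p ^ 2))ˣ) : ZMod (p ^ 2))
        * Matrix.det (g : Matrix (Fin 2) (Fin 2) (ZMod (p ^ 2))) = 1 := Units.inv_mul _
    rwa [Matrix.det_fin_two] at h0
  apply funext4
  · rw [gAct_apply0]
    refine dcancel' hdet ?_
    simp only [rep, v4_0, v4_1, v4_2, v4_3]
    rw [hβ, hγ]
    ring
  · rw [gAct_apply1]
    refine dcancel' hdet ?_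
    simp only [rep, v4_0, v4_1, v4_2, v4_3]
    rw [hβ, hγ, hα]
    ring
  · rw [gAct_apply2]
    refine dcancel' hdet ?_
    simp only [rep, v4_0, v4_1, v4_2, v4_3]
    rw [hβ, hγ, hα]
    ring
  · rw [gAct_apply3]
    refine dcancel' hdet ?_
    simp only [rep, v4_0, v4_1, v4_2, v4_3]
    rw [hβ, hγ, hα]
    linear_combination (g : Matrix (Fin 2) (Fin 2) (ZMod (p ^ 2))) 1 1 * hw

lemma cancel_rep (hp : p ≠ 2) {u : ZMod p} (hu : u ≠ 0) (w : ZMod p)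
    (g h : Matrix.GeneralLinearGroup (Fin 2) (ZMod (p ^ 2)))
    (hgh : gAct g (rep p u) = gAct h (rep p u)) :
    gAct g (rep p w) = gAct h (rep p w) := by
  have h1 : gAct (h⁻¹ * g) (rep p u) = rep p u := by
    rw [gAct_mul, hgh, ← gAct_mul, inv_mul_cancel, gAct_one']
  have h2 := transfer hp hu w (h⁻¹ * g) h1
  have h3 := congrArg (gAct h) h2
  rw [← gAct_mul, ← mul_assoc, mul_inv_cancel, one_mul] at h3
  exact h3

lemma reach_s (hp : p ≠ 2) (x : V (ZMod (p ^ 2))) (hx : x ∈ D121s p) :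
    ∃ g, x = gAct g (![0, 1, 0, 0] : V (ZMod (p ^ 2))) := by
  obtain ⟨h0, h1, hIn, h3⟩ := hx
  obtain ⟨i, hi⟩ := two_unit (p := p) hp
  set γv := ((i⁻¹ : (ZMod (p ^ 2))ˣ) : ZMod (p ^ 2)) * x 2 with hγv
  have hφγ : phi p γv = 0 := by
    rw [hγv, map_mul, (inpr_iff (x 2)).mp hIn, mul_zero]
  have hγγ : γv * γv = 0 := mul_eq_zero_phi hφγ hφγ
  have h2γ : 2 * γv = x 2 := by
    rw [hγv, ← hi, ← mul_assoc, Units.mul_inv, one_mul]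
  set A : Matrix (Fin 2) (Fin 2) (ZMod (p ^ 2)) := ![![x 1, 0], ![γv, 1]] with hA
  have hdetA : A.det = x 1 := by
    rw [Matrix.det_fin_two]; show x 1 * 1 - 0 * γv = x 1; ring
  have hdu : IsUnit A.det := by rw [hdetA]; exact h1
  refine ⟨Matrix.GeneralLinearGroup.mk'' A hdu, ?_⟩
  have hdet : (((Matrix.GeneralLinearGroup.det (Matrix.GeneralLinearGroup.mk'' A hdu))⁻¹
      : (ZMod (p ^ 2))ˣ) : ZMod (p ^ 2)) * (x 1) = 1 := by
    have h0' : (((Matrix.GeneralLinearGroup.det (Matrix.GeneralLinearGroup.mk'' A hdu))⁻¹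
        : (ZMod (p ^ 2))ˣ) : ZMod (p ^ 2)) * A.det = 1 := Units.inv_mul _
    rwa [hdetA] at h0'
  have hc : ((Matrix.GeneralLinearGroup.mk'' A hdu : Matrix.GeneralLinearGroup (Fin 2)
      (ZMod (p ^ 2))) : Matrix (Fin 2) (Fin 2) (ZMod (p ^ 2))) = A := rfl
  have h00 : A 0 0 = x 1 := rfl
  have h01 : A 0 1 = 0 := rfl
  have h10 : A 1 0 = γv := rfl
  have h11 : A 1 1 = 1 := rfl
  refine (funext4 ?_ ?_ ?_ ?_).symm
  · rw [gAct_apply0, hc, h00, h01]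
    refine dcancel' hdet ?_
    simp only [v4_0, v4_1, v4_2, v4_3]
    rw [h0]; ring
  · rw [gAct_apply1, hc, h00, h01, h10, h11]
    refine dcancel' hdet ?_
    simp only [v4_0, v4_1, v4_2, v4_3]
    ring
  · rw [gAct_apply2, hc, h00, h01, h10, h11]
    refine dcancel' hdet ?_
    simp only [v4_0, v4_1, v4_2, v4_3]
    linear_combination (x 1) * h2γ
  · rw [gAct_apply3, hc, h10, h11]
    refine dcancel' hdet ?_
    simp only [v4_0, v4_1, v4_2, v4_3]
    rw [h3]
    linear_combination hγγ

lemma reach_max (hp : p ≠ 2) (x : V (ZMod (p ^ 2))) (hx : x ∈ D121max p)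
    {u t : ZMod p} (ht : t ≠ 0)
    {m : ZMod (p ^ 2)} (hm : x 3 = (p : ZMod (p ^ 2)) * m)
    (hsq : t ^ 2 * u = phi p (x 1) * phi p m) :
    ∃ g, x = gAct g (rep p u) := by
  obtain ⟨h0, h1, hIn, h3⟩ := hx
  obtain ⟨i, hi⟩ := two_unit (p := p) hp
  set γv := ((i⁻¹ : (ZMod (p ^ 2))ˣ) : ZMod (p ^ 2)) * x 2 with hγv
  have hφγ : phi p γv = 0 := by
    rw [hγv, map_mul, (inpr_iff (x 2)).mp hIn, mul_zero]
  have hγγ : γv * γv = 0 := mul_eq_zero_phi hφγ hφγ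
  have h2γ : 2 * γv = x 2 := by
    rw [hγv, ← hi, ← mul_assoc, Units.mul_inv, one_mul]
  set δv := ((t.val : ZMod (p ^ 2))) with hδv
  have hφδ : phi p δv = t := phi_lift t
  have hδu : IsUnit δv := (isUnit_iff_phi _).mpr (by rw [hφδ]; exact ht)
  set A : Matrix (Fin 2) (Fin 2) (ZMod (p ^ 2)) := ![![x 1, 0], ![γv, δv]] with hA
  have hdetA : A.det = x 1 * δv := by
    rw [Matrix.det_fin_two]; show x 1 * δv - 0 * γv = x 1 * δv; ring
  have hdu : IsUnit A.det := by rw [hdetA]; exact h1.mul hδu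
  refine ⟨Matrix.GeneralLinearGroup.mk'' A hdu, ?_⟩
  have hdet : (((Matrix.GeneralLinearGroup.det (Matrix.GeneralLinearGroup.mk'' A hdu))⁻¹
      : (ZMod (p ^ 2))ˣ) : ZMod (p ^ 2)) * (x 1 * δv) = 1 := by
    have h0' : (((Matrix.GeneralLinearGroup.det (Matrix.GeneralLinearGroup.mk'' A hdu))⁻¹
        : (ZMod (p ^ 2))ˣ) : ZMod (p ^ 2)) * A.det = 1 := Units.inv_mul _
    rwa [hdetA] at h0'
  have hc : ((Matrix.GeneralLinearGroup.mk'' A hdu : Matrix.GeneralLinearGroup (Fin 2)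
      (ZMod (p ^ 2))) : Matrix (Fin 2) (Fin 2) (ZMod (p ^ 2))) = A := rfl
  have hkey : δv ^ 3 * ((p : ZMod (p ^ 2)) * ((u.val : ZMod (p ^ 2))))
      = x 1 * δv * ((p : ZMod (p ^ 2)) * m) := by
    calc δv ^ 3 * ((p : ZMod (p ^ 2)) * ((u.val : ZMod (p ^ 2))))
        = (p : ZMod (p ^ 2)) * (δv ^ 3 * ((u.val : ZMod (p ^ 2)))) := by ring
    _ = (p : ZMod (p ^ 2)) * (x 1 * δv * m) := by
        apply (pmul_eq_iff _ _).mpr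
        simp only [map_mul, map_pow, hφδ, phi_lift]
        linear_combination t * hsq
    _ = x 1 * δv * ((p : ZMod (p ^ 2)) * m) := by ring
  have h00 : A 0 0 = x 1 := rfl
  have h01 : A 0 1 = 0 := rfl
  have h10 : A 1 0 = γv := rfl
  have h11 : A 1 1 = δv := rfl
  refine (funext4 ?_ ?_ ?_ ?_).symm
  · rw [gAct_apply0, hc, h00, h01]
    refine dcancel' hdet ?_
    simp only [rep, v4_0, v4_1, v4_2, v4_3]
    rw [h0]; ring
  · rw [gAct_apply1, hc, h00, h01, h10, h11]
    refine dcancel' hdet ?_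
    simp only [rep, v4_0, v4_1, v4_2, v4_3]
    ring
  · rw [gAct_apply2, hc, h00, h01, h10, h11]
    refine dcancel' hdet ?_
    simp only [rep, v4_0, v4_1, v4_2, v4_3]
    linear_combination (x 1 * δv) * h2γ
  · rw [gAct_apply3, hc, h10, h11]
    refine dcancel' hdet ?_
    simp only [rep, v4_0, v4_1, v4_2, v4_3]
    rw [hm]
    linear_combination δv * hγγ + hkey

lemma e2_mem : (![0, 1, 0, 0] : V (ZMod (p ^ 2))) ∈ D121s p :=
  ⟨rfl, isUnit_one, ⟨0, (mul_zero _).symm⟩, rfl⟩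

end Reach

lemma sqclass (p : ℕ) [Fact p.Prime] (u₁ u₂ w : ZMod p) (h1 : u₁ ≠ 0) (h2 : u₂ ≠ 0)
    (hw : w ≠ 0) (hns : ¬∃ t : ZMod p, u₁ = t ^ 2 * u₂) :
    ∃ t : ZMod p, t ≠ 0 ∧ (w = t ^ 2 * u₁ ∨ w = t ^ 2 * u₂) := by
  classical
  have key : ∀ v : ZMod p, v ≠ 0 → IsSquare (w * v⁻¹) → ∃ t : ZMod p, t ≠ 0 ∧ w = t ^ 2 * v := by
    intro v hv hs
    obtain ⟨t, ht⟩ := hs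
    refine ⟨t, ?_, ?_⟩
    · rintro rfl
      apply hw
      field_simp at ht
      simpa using ht
    · field_simp at ht
      rw [ht]; ring
  have hd1 : w * u₁⁻¹ ≠ 0 := by simp [hw, h1]
  by_cases hsq : IsSquare (w * u₁⁻¹)
  · obtain ⟨t, ht, h⟩ := key u₁ h1 hsq
    exact ⟨t, ht, Or.inl h⟩
  · have hns' : ¬IsSquare (u₁ * u₂⁻¹) := by
      rintro ⟨t, ht⟩
      exact hns ⟨t, by field_simp at ht; rw [ht]; ring⟩
    have hd2 : u₁ * u₂⁻¹ ≠ 0 := by simp [h1, h2]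
    have c1 : quadraticChar (ZMod p) (w * u₁⁻¹) = -1 :=
      ((quadraticChar_dichotomy hd1).resolve_left
        (fun h => hsq ((quadraticChar_one_iff_isSquare hd1).mp h)))
    have c2 : quadraticChar (ZMod p) (u₁ * u₂⁻¹) = -1 :=
      ((quadraticChar_dichotomy hd2).resolve_left
        (fun h => hns' ((quadraticChar_one_iff_isSquare hd2).mp h)))
    have hd3 : w * u₂⁻¹ ≠ 0 := by simp [hw, h2]
    have c3 : quadraticChar (ZMod p) (w * u₂⁻¹) = 1 := by
      have heq : w * u₂⁻¹ = (w * u₁⁻¹) * (u₁ * u₂⁻¹) := by field_simp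
      rw [heq, map_mul, c1, c2]; ring
    obtain ⟨t, ht, h⟩ := key u₂ h2 ((quadraticChar_one_iff_isSquare hd3).mp c3)
    exact ⟨t, ht, Or.inr h⟩

/-- Orbit structure of `V_{p²}(1²1_*)` and `V_{p²}(1²1_max)` for `p` odd. -/
theorem orbits_121_mod_p_sq (p : ℕ) [Fact p.Prime] (hp : p ≠ 2) :
    (V121s p = orbitOf (![0, 1, 0, 0] : V (ZMod (p ^ 2)))) ∧
    (∀ u₁ u₂ : ZMod p, u₁ ≠ 0 → u₂ ≠ 0 → (¬∃ t : ZMod p, u₁ = t ^ 2 * u₂) →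
      orbitOf (![0, 1, 0, (p : ZMod (p ^ 2)) * ((u₁.val : ZMod (p ^ 2)))] : V (ZMod (p ^ 2)))
          ∪ orbitOf (![0, 1, 0, (p : ZMod (p ^ 2)) * ((u₂.val : ZMod (p ^ 2)))] : V (ZMod (p ^ 2)))
        = V121max p ∧
      orbitOf (![0, 1, 0, (p : ZMod (p ^ 2)) * ((u₁.val : ZMod (p ^ 2)))] : V (ZMod (p ^ 2)))
          ∩ orbitOf (![0, 1, 0, (p : ZMod (p ^ 2)) * ((u₂.val : ZMod (p ^ 2)))] : V (ZMod (p ^ 2)))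
        = ∅ ∧
      2 * Nat.card
          (orbitOf (![0, 1, 0, (p : ZMod (p ^ 2)) * ((u₁.val : ZMod (p ^ 2)))] : V (ZMod (p ^ 2))))
        = Nat.card (V121max p) ∧
      2 * Nat.card
          (orbitOf (![0, 1, 0, (p : ZMod (p ^ 2)) * ((u₂.val : ZMod (p ^ 2)))] : V (ZMod (p ^ 2))))
        = Nat.card (V121max p)) := by
  classical
  haveI : NeZero (p ^ 2) := neZeroP2 p
  constructor
  · -- part (i)
    apply Set.eq_of_subset_of_subset
    · rintro x ⟨g, a, ha, rfl⟩
      obtain ⟨h, rfl⟩ := reach_s hp a ha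
      exact ⟨g * h, (gAct_mul g h _).symm⟩
    · rintro x ⟨g, rfl⟩
      exact ⟨g, _, e2_mem, rfl⟩
  · intro u₁ u₂ h1 h2 hns
    have horb1 : orbitOf (rep p u₁) ⊆ V121max p := by
      rintro x ⟨g, rfl⟩
      exact ⟨g, rep p u₁, rep_mem_D121max h1, rfl⟩
    have horb2 : orbitOf (rep p u₂) ⊆ V121max p := by
      rintro x ⟨g, rfl⟩
      exact ⟨g, rep p u₂, rep_mem_D121max h2, rfl⟩
    have hunion : orbitOf (rep p u₁) ∪ orbitOf (rep p u₂) = V121max p := by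
      apply Set.eq_of_subset_of_subset
      · exact Set.union_subset horb1 horb2
      · rintro x ⟨g, a, ha, rfl⟩
        obtain ⟨⟨m, hm⟩, h3ne⟩ := ha.2.2.2
        have hφm : phi p m ≠ 0 := fun hz => h3ne (hm.trans ((pmul_eq_zero_iff m).mpr hz))
        have hφa1 : phi p (a 1) ≠ 0 := (isUnit_iff_phi _).mp ha.2.1
        have hwne : phi p (a 1) * phi p m ≠ 0 := mul_ne_zero hφa1 hφm
        obtain ⟨t, ht, hcase⟩ := sqclass p u₁ u₂ (phi p (a 1) * phi p m) h1 h2 hwne hns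
        rcases hcase with hcs | hcs
        · obtain ⟨h, rfl⟩ := reach_max hp a ha ht hm hcs.symm
          exact Or.inl ⟨g * h, (gAct_mul g h _).symm⟩
        · obtain ⟨h, rfl⟩ := reach_max hp a ha ht hm hcs.symm
          exact Or.inr ⟨g * h, (gAct_mul g h _).symm⟩
    have hdisj : orbitOf (rep p u₁) ∩ orbitOf (rep p u₂) = ∅ := by
      apply Set.eq_empty_iff_forall_notMem.mpr
      rintro x ⟨⟨g₁, rfl⟩, ⟨g₂, hx2⟩⟩
      have h5 : gAct (g₂⁻¹ * g₁) (rep p u₁) = rep p u₂ := by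
        calc gAct (g₂⁻¹ * g₁) (rep p u₁)
            = gAct g₂⁻¹ (gAct g₁ (rep p u₁)) := gAct_mul _ _ _
        _ = gAct g₂⁻¹ (gAct g₂ (rep p u₂)) := by rw [← hx2]
        _ = rep p u₂ := by rw [← gAct_mul, inv_mul_cancel, gAct_one']
      obtain ⟨s, hs, hse⟩ := key_sq hp u₂ u₁ h1 _ h5
      apply hns
      refine ⟨s⁻¹, ?_⟩
      rw [hse]
      field_simp
    -- equal cardinalities of the two orbits
    have hcard : (orbitOf (rep p u₁)).ncard = (orbitOf (rep p u₂)).ncard := by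
      set Φ : V (ZMod (p ^ 2)) → V (ZMod (p ^ 2)) := fun x =>
        if hx : ∃ g : Matrix.GeneralLinearGroup (Fin 2) (ZMod (p ^ 2)),
            x = gAct g (rep p u₁) then gAct (Classical.choose hx) (rep p u₂) else x with hΦd
      set Ψ : V (ZMod (p ^ 2)) → V (ZMod (p ^ 2)) := fun y =>
        if hy : ∃ g : Matrix.GeneralLinearGroup (Fin 2) (ZMod (p ^ 2)),
            y = gAct g (rep p u₂) then gAct (Classical.choose hy) (rep p u₁) else y with hΨd
      have hΦmem : ∀ x ∈ orbitOf (rep p u₁), Φ x ∈ orbitOf (rep p u₂) := by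
        intro x hx
        have hx' : ∃ g : Matrix.GeneralLinearGroup (Fin 2) (ZMod (p ^ 2)),
            x = gAct g (rep p u₁) := hx
        rw [hΦd]
        simp only [dif_pos hx']
        exact ⟨Classical.choose hx', rfl⟩
      have hΨmem : ∀ y ∈ orbitOf (rep p u₂), Ψ y ∈ orbitOf (rep p u₁) := by
        intro y hy
        have hy' : ∃ g : Matrix.GeneralLinearGroup (Fin 2) (ZMod (p ^ 2)),
            y = gAct g (rep p u₂) := hy
        rw [hΨd]
        simp only [dif_pos hy']
        exact ⟨Classical.choose hy', rfl⟩
      have hΨΦ : ∀ x ∈ orbitOf (rep p u₁), Ψ (Φ x) = x := by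
        intro x hx
        have hx' : ∃ g : Matrix.GeneralLinearGroup (Fin 2) (ZMod (p ^ 2)),
            x = gAct g (rep p u₁) := hx
        have sg := Classical.choose_spec hx'
        rw [hΦd]
        simp only [dif_pos hx']
        have hy' : ∃ g : Matrix.GeneralLinearGroup (Fin 2) (ZMod (p ^ 2)),
            gAct (Classical.choose hx') (rep p u₂) = gAct g (rep p u₂) :=
          ⟨Classical.choose hx', rfl⟩
        rw [hΨd]
        simp only [dif_pos hy']
        have sk := Classical.choose_spec hy'
        have := cancel_rep hp h2 u₁ (Classical.choose hx') (Classical.choose hy') sk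
        rw [← this, ← sg]
      have hΦΨ : ∀ y ∈ orbitOf (rep p u₂), Φ (Ψ y) = y := by
        intro y hy
        have hy' : ∃ g : Matrix.GeneralLinearGroup (Fin 2) (ZMod (p ^ 2)),
            y = gAct g (rep p u₂) := hy
        have sg := Classical.choose_spec hy'
        rw [hΨd]
        simp only [dif_pos hy']
        have hx' : ∃ g : Matrix.GeneralLinearGroup (Fin 2) (ZMod (p ^ 2)),
            gAct (Classical.choose hy') (rep p u₁) = gAct g (rep p u₁) :=
          ⟨Classical.choose hy', rfl⟩
        rw [hΦd]
        simp only [dif_pos hx']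
        have sk := Classical.choose_spec hx'
        have := cancel_rep hp h1 u₂ (Classical.choose hy') (Classical.choose hx') sk
        rw [← this, ← sg]
      have hbij : Set.BijOn Φ (orbitOf (rep p u₁)) (orbitOf (rep p u₂)) :=
        Set.InvOn.bijOn ⟨hΨΦ, hΦΨ⟩ hΦmem hΨmem
      calc (orbitOf (rep p u₁)).ncard
          = (Φ '' orbitOf (rep p u₁)).ncard := (Set.ncard_image_of_injOn hbij.injOn).symm
      _ = (orbitOf (rep p u₂)).ncard := by rw [hbij.image_eq]
    have hfin1 : (orbitOf (rep p u₁)).Finite := Set.toFinite _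
    have hfin2 : (orbitOf (rep p u₂)).Finite := Set.toFinite _
    have hdisj' : Disjoint (orbitOf (rep p u₁)) (orbitOf (rep p u₂)) :=
      Set.disjoint_iff_inter_eq_empty.mpr hdisj
    have hcount : Nat.card (V121max p)
        = (orbitOf (rep p u₁)).ncard + (orbitOf (rep p u₂)).ncard := by
      rw [← hunion, Nat.card_coe_set_eq, Set.ncard_union_eq hdisj' hfin1 hfin2]
    refine ⟨hunion, hdisj, ?_, ?_⟩
    · show 2 * Nat.card (orbitOf (rep p u₁)) = Nat.card (V121max p)
      rw [Nat.card_coe_set_eq, hcount, hcard]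
      ring
    · show 2 * Nat.card (orbitOf (rep p u₂)) = Nat.card (V121max p)
      rw [Nat.card_coe_set_eq, hcount, ← hcard]
      ring


end OrbitalL
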